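/- arXiv:2406.10780 — 3 statements merged into one kernel-verified Lean document; each statement's English description precedes it below -/
import Mathlib

section
/- For every signed graph (G,σ), the chromatic number of the strong exact-distance -2 graph of (G,σ) is at most col_2(G)^2 · 2^{col_2(G)}. -/
open SimpleGraph

/-- The number of negative edges of a walk, where `σ e = true` means edge `e` is negative. -/
def negCount {V : Type} {G : SimpleGraph V} (σ : Sym2 V → Bool) {x y : V}
    (p : G.Walk x y) : ℕ :=
  (p.edges.filter (fun e => σ e)).length

/-- A walk is negative if it contains an odd number of negative edges. -/
def IsNegWalk {V : Type} {G : SimpleGraph V} (σ : Sym2 V → Bool) {x y : V}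
    (p : G.Walk x y) : Prop :=
  Odd (negCount σ p)

/-- The exact-distance `-k` graph of the signed graph `(G, σ)`:
`xy` is an edge iff `d_G(x,y) = k` and every `xy`-path of length `k` is negative. -/
def exactDistNeg {V : Type} (G : SimpleGraph V) (σ : Sym2 V → Bool) (k : ℕ) :
    SimpleGraph V :=
  SimpleGraph.fromRel (fun x y =>
    G.dist x y = k ∧ ∀ p : G.Walk x y, p.IsPath → p.length = k → IsNegWalk σ p)

/-- The strong exact-distance `-k` graph of the signed graph `(G, σ)`:
`xy` is an edge iff `d_G(x,y) = k` and some `xy`-path of length `k` is negative. -/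
def strongExactDistNeg {V : Type} (G : SimpleGraph V) (σ : Sym2 V → Bool) (k : ℕ) :
    SimpleGraph V :=
  SimpleGraph.fromRel (fun x y =>
    G.dist x y = k ∧ ∃ p : G.Walk x y, p.IsPath ∧ p.length = k ∧ IsNegWalk σ p)

/-- `WReach G L k y` : the set of vertices weakly `k`-reachable from `y` w.r.t. ordering `L`. -/
def WReach {V : Type} (G : SimpleGraph V) (L : LinearOrder V) (k : ℕ) (y : V) : Set V :=
  {x | ∃ p : G.Walk x y, p.IsPath ∧ p.length ≤ k ∧ ∀ z ∈ p.support, L.le x z}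

/-- The weak `k`-colouring number of `G`. -/
noncomputable def wcol {V : Type} (G : SimpleGraph V) (k : ℕ) : ℕ :=
  ⨅ L : LinearOrder V, ⨆ y : V, (WReach G L k y).ncard

/-- `DReach G L k y` : the set of vertices `x` such that there is an `xy`-path
`z_0, …, z_s` (`x = z_0`, `y = z_s`) of length `s ≤ k` on which `x` is the `L`-minimum
and `y ≤_L z_i` for all `⌊k/2⌋ + 1 ≤ i ≤ s`. -/
def DReach {V : Type} (G : SimpleGraph V) (L : LinearOrder V) (k : ℕ) (y : V) : Set V :=
  {x | ∃ p : G.Walk x y, p.IsPath ∧ p.length ≤ k ∧ (∀ z ∈ p.support, L.le x z) ∧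
        ∀ i, k / 2 + 1 ≤ i → i ≤ p.length → L.le y (p.support.getD i y)}

/-- The distance-`k`-colouring number of `G`. -/
noncomputable def dcol {V : Type} (G : SimpleGraph V) (k : ℕ) : ℕ :=
  ⨅ L : LinearOrder V, ⨆ y : V, (DReach G L k y).ncard

/-- `SReach G L k y` : the set of vertices strongly `k`-reachable from `y` w.r.t. `L`. -/
def SReach {V : Type} (G : SimpleGraph V) (L : LinearOrder V) (k : ℕ) (y : V) : Set V :=
  {x | ∃ p : G.Walk x y, p.IsPath ∧ p.length ≤ k ∧ (∀ z ∈ p.support, L.le x z) ∧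
        ∀ z ∈ p.support, z ≠ x → L.le y z}

/-- The strong `k`-colouring number of `G`. -/
noncomputable def scol {V : Type} (G : SimpleGraph V) (k : ℕ) : ℕ :=
  ⨅ L : LinearOrder V, ⨆ y : V, (SReach G L k y).ncard

/-- `H` is a minor of `G` (branch-set definition). -/
def IsMinor {W V : Type} (H : SimpleGraph W) (G : SimpleGraph V) : Prop :=
  ∃ B : W → Set V,
    (∀ w, (B w).Nonempty) ∧
    (∀ w, (G.induce (B w)).Connected) ∧
    (Pairwise (Function.onFun Disjoint B)) ∧
    ∀ w w', H.Adj w w' → ∃ u ∈ B w, ∃ v ∈ B w', G.Adj u v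

/-- `G` is planar iff it has no `K₅` and no `K₃,₃` minor (Wagner's theorem). -/
def IsPlanar {V : Type} (G : SimpleGraph V) : Prop :=
  ¬ IsMinor (completeGraph (Fin 5)) G ∧
  ¬ IsMinor (completeBipartiteGraph (Fin 3) (Fin 3)) G

/-- `G` is outerplanar iff it has no `K₄` and no `K₂,₃` minor. -/
def IsOuterplanar {V : Type} (G : SimpleGraph V) : Prop :=
  ¬ IsMinor (completeGraph (Fin 4)) G ∧
  ¬ IsMinor (completeBipartiteGraph (Fin 2) (Fin 3)) G

/-- `G` has treewidth at most `t` (tree-decomposition definition). -/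
def HasTreewidthLE {V : Type} (G : SimpleGraph V) (t : ℕ) : Prop :=
  ∃ (ι : Type) (T : SimpleGraph ι) (B : ι → Finset V),
    T.Connected ∧ T.IsAcyclic ∧
    (∀ v, ∃ i, v ∈ B i) ∧
    (∀ u v, G.Adj u v → ∃ i, u ∈ B i ∧ v ∈ B i) ∧
    (∀ v, (T.induce {i | v ∈ B i}).Connected) ∧
    (∀ i, (B i).card ≤ t + 1)

/-!
Fix an order attaining `col_2(G) = s`. Greedily colour with `s` colours so that every vertex
differs from the vertices strongly 2-reachable from it; then the lower neighbours of any vertex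
get pairwise distinct colours. For a negative path `u w v` with `u < v`: if `v < w`, then `u` is
strongly 2-reachable from `v`; if `u < w < v`, a second greedy colouring with `s` colours separates
such pairs of equal first colour, since `u` is determined by `w` (a vertex strongly 2-reachable
from `v`) and the first colour; if `w < u`, the edges `wu` and `wv` have different signs, and `w`
is recognised among the lower neighbours of `u` and of `v` by its first colour, so the sets of
first colours of the lower neighbours joined by a negative edge differ. This gives
`s · s · 2^s` colours.
-/

lemma exists_fin_coloring_of_ncard_lt {V : Type*} [Preorder V] [Finite V] {n : ℕ}
    (D : V → Set V) (hD : ∀ v, ∀ u ∈ D v, u < v) (hcard : ∀ v, (D v).ncard < n) :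
    ∃ g : V → Fin n, ∀ v, ∀ u ∈ D v, g u ≠ g v := by
  have free : ∀ v (rec : ∀ u, u < v → Fin n),
      ∃ i : Fin n, ∀ u (hu : u ∈ D v), rec u (hD v u hu) ≠ i := by
    intro v rec
    by_contra! hall
    have hrange : Set.range (fun u : D v => rec u (hD v u u.2)) = Set.univ :=
      Set.eq_univ_of_forall fun i => by
        obtain ⟨u, hu, h⟩ := hall i
        exact ⟨⟨u, hu⟩, h⟩
    have := Finite.card_range_le (fun u : D v => rec u (hD v u u.2))
    rw [hrange, Nat.card_univ, Nat.card_coe_set_eq, Nat.card_fin] at this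
    exact (hcard v).not_ge this
  let g : V → Fin n := wellFounded_lt.fix fun v rec => (free v rec).choose
  refine ⟨g, fun v u hu => ?_⟩
  rw [show g v = _ from wellFounded_lt.fix_eq _ v]
  exact (free v fun u _ => g u).choose_spec u hu

section NegativeWalks

variable {V : Type} {G : SimpleGraph V} {σ : Sym2 V → Bool}

lemma IsNegWalk.reverse {x y : V} {p : G.Walk x y} (h : IsNegWalk σ p) :
    IsNegWalk σ p.reverse := by
  rwa [IsNegWalk, negCount, Walk.edges_reverse, List.filter_reverse, List.length_reverse]

lemma exists_adj_adj_sign_ne_of_isNegWalk {u v : V} {p : G.Walk u v} (hlen : p.length = 2)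
    (hneg : IsNegWalk σ p) : ∃ w, G.Adj u w ∧ G.Adj w v ∧ σ s(u, w) ≠ σ s(w, v) := by
  match p, hlen with
  | .cons (v := w) huw (.cons hwv .nil), _ =>
    refine ⟨w, huw, hwv, fun h => ?_⟩
    simp only [IsNegWalk, negCount, Walk.edges_cons, Walk.edges_nil, List.filter_cons,
      List.filter_nil, h] at hneg
    by_cases hσ : σ s(w, v) <;> simp [hσ, Nat.odd_iff] at hneg

lemma exists_adj_adj_sign_ne_of_strongExactDistNeg_adj {u v : V}
    (h : (strongExactDistNeg G σ 2).Adj u v) :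
    ∃ w, G.Adj u w ∧ G.Adj w v ∧ σ s(u, w) ≠ σ s(w, v) := by
  rcases (fromRel_adj _ _ _).1 h |>.2 with ⟨-, p, -, hlen, hneg⟩ | ⟨-, p, -, hlen, hneg⟩
  · exact exists_adj_adj_sign_ne_of_isNegWalk hlen hneg
  · exact exists_adj_adj_sign_ne_of_isNegWalk (by rw [Walk.length_reverse, hlen]) hneg.reverse

end NegativeWalks

section StrongReach

variable {V : Type} {G : SimpleGraph V} [LinearOrder V] {k : ℕ} {x y w : V}

lemma le_of_mem_SReach (h : x ∈ SReach G ‹_› k y) : x ≤ y := by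
  obtain ⟨p, -, -, hmin, -⟩ := h
  exact hmin y p.end_mem_support

lemma self_mem_SReach : y ∈ SReach G ‹_› k y :=
  ⟨.nil, .nil, by simp, by simp, by simp⟩

lemma mem_SReach_of_adj (hk : 1 ≤ k) (h : G.Adj x y) (hxy : x ≤ y) :
    x ∈ SReach G ‹_› k y := by
  refine ⟨.cons h .nil, by simp [h.ne], by simpa using hk, ?_, ?_⟩ <;>
    simp [hxy]

lemma mem_SReach_of_adj_adj (hk : 2 ≤ k) (hxw : G.Adj x w) (hwy : G.Adj w y) (hxy : x < y)
    (hyw : y ≤ w) : x ∈ SReach G ‹_› k y := by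
  refine ⟨.cons hxw (.cons hwy .nil), by simp [hxw.ne, hwy.ne, hxy.ne], by simpa using hk,
    ?_, ?_⟩ <;>
    simp [hxy.le, hyw, hxy.le.trans hyw]

end StrongReach

lemma exists_linearOrder_ncard_SReach_le_scol {V : Type} [Finite V] (G : SimpleGraph V) (k : ℕ) :
    ∃ L : LinearOrder V, ∀ y, (SReach G L k y).ncard ≤ scol G k := by
  obtain ⟨n, ⟨e⟩⟩ := Finite.exists_equiv_fin V
  have : Nonempty (LinearOrder V) := ⟨LinearOrder.lift' e e.injective⟩
  obtain ⟨L, hL⟩ := ciInf_mem fun L : LinearOrder V => ⨆ y, (SReach G L k y).ncard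
  refine ⟨L, fun y => ?_⟩
  rw [scol, ← hL]
  exact le_ciSup (f := fun y => (SReach G L k y).ncard) (Set.finite_range _).bddAbove y

def IsSReachColoring {V : Type} {α : Type*} [LinearOrder V] (G : SimpleGraph V) (k : ℕ)
    (g : V → α) : Prop :=
  ∀ v, ∀ u ∈ SReach G ‹_› k v, u ≠ v → g u ≠ g v

def negLowerColors {V : Type} {α : Type*} [LinearOrder V] (G : SimpleGraph V) (σ : Sym2 V → Bool)
    (g : V → α) (v : V) : Set α :=
  g '' {w | G.Adj w v ∧ w < v ∧ σ s(w, v) = true}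

section Coloring

variable {V : Type} [LinearOrder V] {G : SimpleGraph V} {α β : Type*} {s : ℕ}

lemma ncard_SReach_diff_self_lt [Finite V] {k : ℕ} {y : V} (hR : (SReach G ‹_› k y).ncard ≤ s) :
    (SReach G ‹_› k y \ {y}).ncard < s :=
  (Set.ncard_sdiff_singleton_lt_of_mem self_mem_SReach).trans_le hR

lemma exists_isSReachColoring [Finite V] {k : ℕ} (hR : ∀ y, (SReach G ‹_› k y).ncard ≤ s) :
    ∃ g : V → Fin s, IsSReachColoring G k g := by
  obtain ⟨g, hg⟩ := exists_fin_coloring_of_ncard_lt (n := s) (fun v => SReach G _ k v \ {v})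
    (fun _ _ hu => lt_of_le_of_ne (le_of_mem_SReach hu.1) hu.2)
    (fun v => ncard_SReach_diff_self_lt (hR v))
  exact ⟨g, fun v u hu hne => hg v u ⟨hu, hne⟩⟩

variable {g : V → α}

lemma IsSReachColoring.ne {k : ℕ} (hg : IsSReachColoring G k g) {u v : V}
    (hu : u ∈ SReach G ‹_› k v) (huv : u ≠ v) : g u ≠ g v :=
  hg v u hu huv

lemma IsSReachColoring.injOn_adj_lt (hg : IsSReachColoring G 2 g) (v : V) :
    Set.InjOn g {x | G.Adj x v ∧ x < v} := by
  intro x ⟨hx, hxv⟩ x' ⟨hx', hx'v⟩ h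
  by_contra hne
  wlog hlt : x < x' generalizing x x'
  · exact this hx' hx'v hx hxv h.symm (Ne.symm hne) ((Ne.symm hne).lt_of_le (not_lt.1 hlt))
  exact hg.ne (mem_SReach_of_adj_adj le_rfl hx hx'.symm hlt hx'v.le) hne h

lemma IsSReachColoring.exists_coloring_of_adj_adj [Finite V]
    (hR : ∀ y, (SReach G ‹_› 2 y).ncard ≤ s) (hg : IsSReachColoring G 2 g) :
    ∃ h : V → Fin s, ∀ ⦃u w v⦄, G.Adj u w → G.Adj w v → u < w → w < v → g u = g v →
      h u ≠ h v := by
  let D (v : V) : Set V := {u | g u = g v ∧ ∃ w, G.Adj u w ∧ G.Adj w v ∧ u < w ∧ w < v}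
  have hcard (v : V) : (D v).ncard < s := by
    choose! mid hmid using fun u (hu : u ∈ D v) => hu.2
    refine lt_of_le_of_lt ?_ (ncard_SReach_diff_self_lt (hR v))
    refine Set.ncard_le_ncard_of_injOn mid (fun u hu => ?_) (fun u hu u' hu' heq => ?_)
    · obtain ⟨-, hwv, -, hlt⟩ := hmid u hu
      exact ⟨mem_SReach_of_adj one_le_two hwv hlt.le, hlt.ne⟩
    · obtain ⟨hu_adj, -, hu_lt, -⟩ := hmid u hu
      obtain ⟨hu'_adj, -, hu'_lt, -⟩ := hmid u' hu'
      rw [← heq] at hu'_adj hu'_lt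
      exact hg.injOn_adj_lt (mid u) ⟨hu_adj, hu_lt⟩ ⟨hu'_adj, hu'_lt⟩ (hu.1.trans hu'.1.symm)
  obtain ⟨h, hh⟩ := exists_fin_coloring_of_ncard_lt D
    (fun _ _ ⟨_, _, _, _, huw, hwv⟩ => huw.trans hwv) hcard
  exact ⟨h, fun u w v huw hwv hlt₁ hlt₂ hgu => hh v u ⟨hgu, w, huw, hwv, hlt₁, hlt₂⟩⟩

lemma IsSReachColoring.mem_negLowerColors_iff (hg : IsSReachColoring G 2 g)
    (σ : Sym2 V → Bool) {w v : V} (hw : G.Adj w v) (hwv : w < v) :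
    g w ∈ negLowerColors G σ g v ↔ σ s(w, v) = true := by
  refine ⟨fun ⟨w', ⟨hw', hw'v, hσ⟩, h⟩ => ?_, fun hσ => ⟨w, ⟨hw, hwv, hσ⟩, rfl⟩⟩
  rwa [← hg.injOn_adj_lt v ⟨hw', hw'v⟩ ⟨hw, hwv⟩ h]

lemma IsSReachColoring.ne_of_adj_adj_sign_ne (hg : IsSReachColoring G 2 g) {h : V → β}
    (hh : ∀ ⦃u w v⦄, G.Adj u w → G.Adj w v → u < w → w < v → g u = g v → h u ≠ h v)
    (σ : Sym2 V → Bool) {u w v : V} (huv : u ≠ v) (huw : G.Adj u w) (hwv : G.Adj w v)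
    (hσ : σ s(u, w) ≠ σ s(w, v)) :
    (g u, h u, negLowerColors G σ g u) ≠ (g v, h v, negLowerColors G σ g v) := by
  wlog hlt : u < v generalizing u v
  · refine (this huv.symm hwv.symm huw.symm ?_ (huv.symm.lt_of_le (not_lt.1 hlt))).symm
    rwa [Sym2.eq_swap, ne_comm, Sym2.eq_swap]
  simp only [ne_eq, Prod.mk.injEq, not_and]
  intro hg_eq hh_eq hN_eq
  obtain hvw | hwv' := hwv.ne'.lt_or_gt
  · exact hg.ne (mem_SReach_of_adj_adj le_rfl huw hwv hlt hvw.le) hlt.ne hg_eq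
  obtain huw' | hwu := huw.ne.lt_or_gt
  · exact hh huw hwv huw' hwv' hg_eq hh_eq
  refine hσ (Bool.eq_iff_iff.2 ?_)
  rw [Sym2.eq_swap, ← hg.mem_negLowerColors_iff σ huw.symm hwu, hN_eq,
    hg.mem_negLowerColors_iff σ hwv hwv']

lemma strongExactDistNeg_two_colorable_of_ncard_SReach_le [Finite V] (σ : Sym2 V → Bool)
    (hR : ∀ y, (SReach G ‹_› 2 y).ncard ≤ s) :
    (strongExactDistNeg G σ 2).Colorable (s ^ 2 * 2 ^ s) := by
  obtain ⟨g, hg⟩ := exists_isSReachColoring hR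
  obtain ⟨h, hh⟩ := hg.exists_coloring_of_adj_adj hR
  have hcard : Fintype.card (Fin s × Fin s × Set (Fin s)) = s ^ 2 * 2 ^ s := by
    simp only [Fintype.card_prod, Fintype.card_fin, Fintype.card_set]
    ring
  refine hcard ▸ (Coloring.mk (fun v => (g v, h v, negLowerColors G σ g v)) ?_).colorable
  intro u v hadj
  obtain ⟨w, huw, hwv, hσ⟩ := exists_adj_adj_sign_ne_of_strongExactDistNeg_adj hadj
  exact hg.ne_of_adj_adj_sign_ne hh σ hadj.ne huw hwv hσ

end Coloring

theorem strongExactDistNeg_two_chromatic_le_scol_sq_mul_pow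
    {V : Type} [Fintype V] (G : SimpleGraph V) (σ : Sym2 V → Bool) :
    (strongExactDistNeg G σ 2).chromaticNumber ≤
      (((scol G 2) ^ 2 * 2 ^ (scol G 2) : ℕ) : ℕ∞) := by
  obtain ⟨L, hR⟩ := exists_linearOrder_ncard_SReach_le_scol G 2
  let _ : LinearOrder V := L
  exact (strongExactDistNeg_two_colorable_of_ncard_SReach_le σ hR).chromaticNumber_le
end

section
/- For every even integer k ≥ 4 and every integer ℓ, there exists a signed graph Ĝ whose underlying graph is outerplanar such that the strong exact-distance -k graph of Ĝ contains a clique of size ℓ, hence χ of the strong exact-distance -k graph is at least ℓ. -/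
open SimpleGraph

/-!
Glue `ℓ` cycles of length `k` at one vertex. Off the centre the graph is a union of paths, which
we lay out on a line; so in a minor model every branch set avoiding the centre is a block of
consecutive positions, and blocks joined by an edge are adjacent on the line. Three blocks cannot
be pairwise adjacent, a block has at most two neighbours, and four blocks cannot form a 4-cycle;
since at most one branch set contains the centre, this rules out `K₄` and `K₂,₃` minors.
The vertices opposite the centre are pairwise at distance `k`, witnessed by a path through the
centre that uses exactly one negative edge.
-/

namespace SimpleGraph

variable {V : Type*} {G : SimpleGraph V}

namespace Walk

variable {f : V → ℤ}

theorem apply_le_apply_add_length (hf : ∀ ⦃u v⦄, G.Adj u v → f v ≤ f u + 1) {x y : V}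
    (p : G.Walk x y) : f y ≤ f x + p.length := by
  induction p with
  | nil => simp
  | cons h p ih => have := hf h; push_cast [length_cons]; omega

theorem exists_mem_support_apply_eq (hf : ∀ ⦃u v⦄, G.Adj u v → f v ≤ f u + 1) {x y : V}
    (p : G.Walk x y) {t : ℤ} (hx : f x ≤ t) (hy : t ≤ f y) : ∃ z ∈ p.support, f z = t := by
  induction p with
  | nil => exact ⟨_, List.mem_singleton_self _, by omega⟩
  | @cons u w y h p ih =>
    by_cases ht : f u = t
    · exact ⟨u, start_mem_support _, ht⟩
    · obtain ⟨z, hz, rfl⟩ := ih (by have := hf h; omega) hy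
      exact ⟨z, List.mem_cons_of_mem _ hz, rfl⟩

end Walk

theorem Reachable.sub_le_dist {f : V → ℤ} (hf : ∀ ⦃u v⦄, G.Adj u v → f v ≤ f u + 1) {x y : V}
    (hxy : G.Reachable x y) : f y - f x ≤ G.dist x y := by
  obtain ⟨p, hp⟩ := hxy.exists_walk_length_eq_dist
  have := p.apply_le_apply_add_length hf
  omega

end SimpleGraph

section negCount

variable {V : Type} {G : SimpleGraph V} (σ : Sym2 V → Bool)

lemma negCount_cons {x y z : V} (h : G.Adj x y) (p : G.Walk y z) :
    negCount σ (.cons h p) = (σ s(x, y)).toNat + negCount σ p := by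
  cases hσ : σ s(x, y) <;> simp [negCount, hσ, add_comm]

lemma negCount_append {x y z : V} (p : G.Walk x y) (q : G.Walk y z) :
    negCount σ (p.append q) = negCount σ p + negCount σ q := by
  simp [negCount, SimpleGraph.Walk.edges_append]

lemma negCount_reverse {x y : V} (p : G.Walk x y) : negCount σ p.reverse = negCount σ p := by
  simp [negCount, SimpleGraph.Walk.edges_reverse, List.filter_reverse]

lemma negCount_eq_zero {x y : V} {p : G.Walk x y} (h : ∀ e ∈ p.edges, σ e = false) :
    negCount σ p = 0 := by
  simpa [negCount, List.filter_eq_nil_iff] using h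

end negCount

/-- `ℓ` cycles of length `n + 1` sharing the vertex `none`: the `i`-th one is
`none, some (i, 0), …, some (i, n - 1), none`. -/
def cycleBouquet (ℓ n : ℕ) : SimpleGraph (Option (Fin ℓ × Fin n)) :=
  SimpleGraph.fromRel fun x y => match x, y with
    | none, some (_, j) => j.val = 0 ∨ j.val + 1 = n
    | some (i, j), some (i', j') => i = i' ∧ j.val + 1 = j'.val
    | _, _ => False

namespace cycleBouquet

variable {ℓ n : ℕ}

lemma adj_none_some {i : Fin ℓ} {j : Fin n} :
    (cycleBouquet ℓ n).Adj none (some (i, j)) ↔ j.val = 0 ∨ j.val + 1 = n := by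
  simp [cycleBouquet]

lemma adj_some_some {i i' : Fin ℓ} {j j' : Fin n} :
    (cycleBouquet ℓ n).Adj (some (i, j)) (some (i', j')) ↔
      i = i' ∧ (j.val + 1 = j'.val ∨ j'.val + 1 = j.val) := by
  simp only [cycleBouquet, SimpleGraph.fromRel_adj, ne_eq, Option.some.injEq, Prod.mk.injEq]
  constructor
  · rintro ⟨-, ⟨rfl, h⟩ | ⟨rfl, h⟩⟩ <;> simp [h]
  · rintro ⟨rfl, h⟩
    refine ⟨fun h' => ?_, by omega⟩
    rw [h'.2] at h
    omega

/-- Numbering the cycles one after the other lays the graph minus its centre out on a line. -/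
def pos : Option (Fin ℓ × Fin n) → ℕ
  | none => 0
  | some x => finProdFinEquiv x + 1

lemma pos_injective : Function.Injective (pos (ℓ := ℓ) (n := n)) := by
  rintro (_ | x) (_ | y) h
  · rfl
  · simp [pos] at h
  · simp [pos] at h
  · exact congrArg some (finProdFinEquiv.injective (Fin.ext (by simp only [pos] at h; omega)))

lemma pos_le_pos_add_one {u v : Option (Fin ℓ × Fin n)} (h : (cycleBouquet ℓ n).Adj u v)
    (hu : u ≠ none) (hv : v ≠ none) : pos v ≤ pos u + 1 := by
  obtain ⟨⟨i, j⟩, rfl⟩ := Option.ne_none_iff_exists'.mp hu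
  obtain ⟨⟨i', j'⟩, rfl⟩ := Option.ne_none_iff_exists'.mp hv
  obtain ⟨rfl, h⟩ := adj_some_some.mp h
  simp only [pos, finProdFinEquiv_apply_val]
  omega

section Arcs

variable {S T : Set (Option (Fin ℓ × Fin n))}

/-- A stretch of one cycle, not through the centre. -/
def IsArc (S : Set (Option (Fin ℓ × Fin n))) : Prop :=
  ((cycleBouquet ℓ n).induce S).Connected ∧ none ∉ S

def Joined (S T : Set (Option (Fin ℓ × Fin n))) : Prop :=
  ∃ u ∈ S, ∃ v ∈ T, (cycleBouquet ℓ n).Adj u v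

noncomputable def lo (S : Set (Option (Fin ℓ × Fin n))) : ℕ := sInf (pos '' S)

noncomputable def hi (S : Set (Option (Fin ℓ × Fin n))) : ℕ := sSup (pos '' S)

lemma lo_le_pos {z : Option (Fin ℓ × Fin n)} (hz : z ∈ S) : lo S ≤ pos z :=
  Nat.sInf_le ⟨z, hz, rfl⟩

lemma pos_le_hi {z : Option (Fin ℓ × Fin n)} (hz : z ∈ S) : pos z ≤ hi S :=
  le_csSup (Set.toFinite _).bddAbove ⟨z, hz, rfl⟩

namespace IsArc

lemma exists_pos_eq (hS : IsArc S) {t : ℕ} (hlo : lo S ≤ t) (hhi : t ≤ hi S) :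
    ∃ z ∈ S, pos z = t := by
  obtain ⟨z₀⟩ := hS.1.nonempty
  have hne : (pos '' S).Nonempty := ⟨_, z₀, z₀.2, rfl⟩
  obtain ⟨a, ha, hpa⟩ := Nat.sInf_mem hne
  obtain ⟨b, hb, hpb⟩ := Nat.sSup_mem hne (Set.toFinite _).bddAbove
  have hstep : ∀ ⦃u v : S⦄, ((cycleBouquet ℓ n).induce S).Adj u v →
      (pos v.1 : ℤ) ≤ pos u.1 + 1 := fun u v h => by
    have := pos_le_pos_add_one (u := u.1) (v := v.1) h (ne_of_mem_of_not_mem u.2 hS.2)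
      (ne_of_mem_of_not_mem v.2 hS.2)
    omega
  obtain ⟨z, -, hz⟩ := (hS.1.preconnected ⟨a, ha⟩ ⟨b, hb⟩).some.exists_mem_support_apply_eq
    hstep (t := t) (by simp only [hpa, lo] at hlo ⊢; omega)
    (by simp only [hpb, hi] at hhi ⊢; omega)
  exact ⟨z, z.2, by omega⟩

lemma lo_le_hi (hS : IsArc S) : lo S ≤ hi S := by
  obtain ⟨z⟩ := hS.1.nonempty
  exact (lo_le_pos z.2).trans (pos_le_hi z.2)

lemma hi_lt_lo_or_hi_lt_lo (hS : IsArc S) (hT : IsArc T) (hST : Disjoint S T) :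
    hi S < lo T ∨ hi T < lo S := by
  by_contra! h
  have := hS.lo_le_hi
  have := hT.lo_le_hi
  obtain ⟨z, hz, hzt⟩ := hS.exists_pos_eq (t := max (lo S) (lo T)) (by omega) (by omega)
  obtain ⟨z', hz', hz't⟩ := hT.exists_pos_eq (t := max (lo S) (lo T)) (by omega) (by omega)
  rw [← hz't] at hzt
  exact Set.disjoint_left.mp hST hz (pos_injective hzt ▸ hz')

lemma hi_add_one_eq_lo_or (hS : IsArc S) (hT : IsArc T) (hST : Disjoint S T)
    (hadj : Joined S T) :
    hi S + 1 = lo T ∨ hi T + 1 = lo S := by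
  obtain ⟨u, hu, v, hv, huv⟩ := hadj
  have hu0 : u ≠ none := ne_of_mem_of_not_mem hu hS.2
  have hv0 : v ≠ none := ne_of_mem_of_not_mem hv hT.2
  have := pos_le_pos_add_one huv hu0 hv0
  have := pos_le_pos_add_one huv.symm hv0 hu0
  have := lo_le_pos hu; have := pos_le_hi hu; have := lo_le_pos hv; have := pos_le_hi hv
  have := hS.hi_lt_lo_or_hi_lt_lo hT hST
  omega

end IsArc

variable {A B C D : Set (Option (Fin ℓ × Fin n))}

lemma not_triangle (hA : IsArc A) (hB : IsArc B) (hC : IsArc C)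
    (hAB : Disjoint A B) (hAC : Disjoint A C) (hBC : Disjoint B C)
    (jAB : Joined A B) (jAC : Joined A C) (jBC : Joined B C) : False := by
  have := hA.lo_le_hi; have := hB.lo_le_hi; have := hC.lo_le_hi
  have := hA.hi_add_one_eq_lo_or hB hAB jAB
  have := hA.hi_add_one_eq_lo_or hC hAC jAC
  have := hB.hi_add_one_eq_lo_or hC hBC jBC
  omega

lemma not_claw (hA : IsArc A) (hB : IsArc B) (hC : IsArc C) (hD : IsArc D)
    (hAB : Disjoint A B) (hAC : Disjoint A C) (hAD : Disjoint A D)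
    (hBC : Disjoint B C) (hBD : Disjoint B D) (hCD : Disjoint C D)
    (jAB : Joined A B) (jAC : Joined A C) (jAD : Joined A D) : False := by
  have := hA.lo_le_hi; have := hB.lo_le_hi; have := hC.lo_le_hi; have := hD.lo_le_hi
  have := hA.hi_add_one_eq_lo_or hB hAB jAB
  have := hA.hi_add_one_eq_lo_or hC hAC jAC
  have := hA.hi_add_one_eq_lo_or hD hAD jAD
  have := hB.hi_lt_lo_or_hi_lt_lo hC hBC
  have := hB.hi_lt_lo_or_hi_lt_lo hD hBD
  have := hC.hi_lt_lo_or_hi_lt_lo hD hCD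
  omega

lemma not_square (hA : IsArc A) (hB : IsArc B) (hC : IsArc C) (hD : IsArc D)
    (hAB : Disjoint A B) (hAC : Disjoint A C) (hAD : Disjoint A D)
    (hBC : Disjoint B C) (hBD : Disjoint B D) (hCD : Disjoint C D)
    (jAC : Joined A C) (jAD : Joined A D) (jBC : Joined B C) (jBD : Joined B D) : False := by
  have := hA.lo_le_hi; have := hB.lo_le_hi; have := hC.lo_le_hi; have := hD.lo_le_hi
  have := hA.hi_add_one_eq_lo_or hC hAC jAC
  have := hA.hi_add_one_eq_lo_or hD hAD jAD
  have := hB.hi_add_one_eq_lo_or hC hBC jBC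
  have := hB.hi_add_one_eq_lo_or hD hBD jBD
  have := hA.hi_lt_lo_or_hi_lt_lo hB hAB
  have := hC.hi_lt_lo_or_hi_lt_lo hD hCD
  omega

end Arcs

lemma not_isMinor_completeGraph_four :
    ¬ IsMinor (completeGraph (Fin 4)) (cycleBouquet ℓ n) := by
  rintro ⟨B, -, hconn, hdisj, hjoin⟩
  obtain ⟨a, b, c, hab, hac, hbc, ha, hb, hc⟩ : ∃ a b c : Fin 4, a ≠ b ∧ a ≠ c ∧ b ≠ c ∧
      none ∉ B a ∧ none ∉ B b ∧ none ∉ B c := by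
    by_cases h : ∃ w, none ∈ B w
    · obtain ⟨w, hw⟩ := h
      have avoid : ∀ w', w' ≠ w → none ∉ B w' := fun w' hw' h' =>
        Set.disjoint_left.mp (hdisj hw') h' hw
      obtain ⟨a, b, c, hab, hac, hbc, haw, hbw, hcw⟩ : ∃ a b c : Fin 4, a ≠ b ∧ a ≠ c ∧ b ≠ c ∧
          a ≠ w ∧ b ≠ w ∧ c ≠ w := by
        fin_cases w <;> decide
      exact ⟨a, b, c, hab, hac, hbc, avoid a haw, avoid b hbw, avoid c hcw⟩
    · exact ⟨0, 1, 2, by decide, by decide, by decide, not_exists.mp h 0, not_exists.mp h 1,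
        not_exists.mp h 2⟩
  exact not_triangle ⟨hconn a, ha⟩ ⟨hconn b, hb⟩ ⟨hconn c, hc⟩ (hdisj hab) (hdisj hac)
    (hdisj hbc) (hjoin a b hab) (hjoin a c hac) (hjoin b c hbc)

lemma not_isMinor_completeBipartiteGraph_two_three :
    ¬ IsMinor (completeBipartiteGraph (Fin 2) (Fin 3)) (cycleBouquet ℓ n) := by
  rintro ⟨B, -, hconn, hdisj, hjoin⟩
  have avoid : ∀ w w', w' ≠ w → none ∈ B w → none ∉ B w' := fun w w' hw' hw h' =>
    Set.disjoint_left.mp (hdisj hw') h' hw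
  have arc : ∀ w, none ∉ B w → IsArc (B w) := fun w hw => ⟨hconn w, hw⟩
  have join : ∀ a b, Joined (B (.inl a)) (B (.inr b)) := fun a b =>
    hjoin _ _ (by simp [completeBipartiteGraph])
  by_cases hright : ∀ b, none ∉ B (.inr b)
  · obtain ⟨a, ha⟩ : ∃ a, none ∉ B (.inl a) := by
      by_cases h0 : none ∈ B (.inl 0)
      · exact ⟨1, avoid _ _ (by simp) h0⟩
      · exact ⟨0, h0⟩
    exact not_claw (arc _ ha) (arc _ (hright 0)) (arc _ (hright 1)) (arc _ (hright 2))
      (hdisj (by simp)) (hdisj (by simp)) (hdisj (by simp)) (hdisj (by simp))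
      (hdisj (by simp)) (hdisj (by simp)) (join a 0) (join a 1) (join a 2)
  · obtain ⟨b₀, hb₀⟩ := not_forall_not.mp hright
    obtain ⟨b, b', hbb', hb, hb'⟩ : ∃ b b' : Fin 3, b ≠ b' ∧ b ≠ b₀ ∧ b' ≠ b₀ := by
      fin_cases b₀ <;> decide
    exact not_square (arc _ (avoid _ (.inl 0) (by simp) hb₀))
      (arc _ (avoid _ (.inl 1) (by simp) hb₀)) (arc _ (avoid _ _ (by simpa using hb) hb₀))
      (arc _ (avoid _ _ (by simpa using hb') hb₀))
      (hdisj (by simp)) (hdisj (by simp)) (hdisj (by simp)) (hdisj (by simp))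
      (hdisj (by simp)) (hdisj (by simpa using hbb')) (join 0 b) (join 0 b') (join 1 b) (join 1 b')

theorem isOuterplanar : IsOuterplanar (cycleBouquet ℓ n) :=
  ⟨not_isMinor_completeGraph_four, not_isMinor_completeBipartiteGraph_two_three⟩

/-- Distance to the centre, counted positively on the `i`-th cycle and negatively elsewhere. -/
def potential (i : Fin ℓ) : Option (Fin ℓ × Fin n) → ℤ
  | none => 0
  | some (i', j) => (if i' = i then 1 else -1) * min (j.val + 1 : ℤ) (n - j.val)

lemma potential_le_potential_add_one (i : Fin ℓ) ⦃u v : Option (Fin ℓ × Fin n)⦄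
    (h : (cycleBouquet ℓ n).Adj u v) : potential i v ≤ potential i u + 1 := by
  match u, v, h with
  | none, some (i', j), h =>
    have := adj_none_some.mp h
    simp only [potential]; split_ifs <;> omega
  | some (i', j), none, h =>
    have := adj_none_some.mp h.symm
    simp only [potential]; split_ifs <;> omega
  | some (i', j), some (i'', j'), h =>
    obtain ⟨rfl, h⟩ := adj_some_some.mp h
    simp only [potential]; split_ifs <;> omega

lemma exists_walk_of_le (i : Fin ℓ) {a b : Fin n} (hab : a ≤ b) :
    ∃ p : (cycleBouquet ℓ n).Walk (some (i, a)) (some (i, b)),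
      p.length + a = b ∧ none ∉ p.support := by
  obtain ⟨d, hd⟩ : ∃ d, b.val = a.val + d := ⟨b - a, by omega⟩
  induction d generalizing b with
  | zero => exact ⟨.copy .nil rfl (by rw [Fin.ext hd]), by simp [hd], by simp⟩
  | succ d ih =>
    obtain ⟨p, hp, hnone⟩ := ih (b := ⟨a + d, by omega⟩) (by simp [Fin.le_def]) rfl
    have hadj : (cycleBouquet ℓ n).Adj (some (i, ⟨a + d, by omega⟩)) (some (i, b)) :=
      adj_some_some.mpr ⟨rfl, Or.inl (by simp only; omega)⟩
    refine ⟨p.concat hadj, ?_, by simp [hnone]⟩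
    simp only [Walk.length_concat] at hp ⊢
    omega

variable {m : ℕ}

def sign (ℓ n : ℕ) : Sym2 (Option (Fin ℓ × Fin (n + 1))) → Bool :=
  fun e => decide (∃ i, e = s(none, some (i, 0)))

lemma sign_eq_false_of_mem_edges {x y : Option (Fin ℓ × Fin (n + 1))}
    {p : (cycleBouquet ℓ (n + 1)).Walk x y} (hp : none ∉ p.support) {e} (he : e ∈ p.edges) :
    sign ℓ n e = false := by
  simp only [sign, decide_eq_false_iff_not, not_exists]
  rintro i rfl
  exact hp (p.fst_mem_support_of_mem_edges he)

/-- The `i`-th leaf of the star: the cycle of length `2 * m + 2` through it is the paper's pair of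
paths from the centre, the one through `some (i, 0)` being the negative one. -/
def leaf (m : ℕ) (i : Fin ℓ) : Option (Fin ℓ × Fin (2 * m + 1)) := some (i, ⟨m, by omega⟩)

lemma potential_leaf (i i' : Fin ℓ) :
    potential i' (leaf m i) = if i = i' then (m + 1 : ℤ) else -(m + 1) := by
  simp only [potential, leaf]
  split_ifs <;> omega

lemma leaf_injective : Function.Injective (leaf (ℓ := ℓ) m) := fun i i' h => by
  simpa [leaf] using h

/-- Down the `i`-th cycle to the centre through its negative edge, then up the `i'`-th cycle
from the other side. -/
lemma exists_negWalk_leaf (hm : m ≠ 0) (i i' : Fin ℓ) :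
    ∃ p : (cycleBouquet ℓ (2 * m + 1)).Walk (leaf m i) (leaf m i'),
      p.length = 2 * m + 2 ∧ IsNegWalk (sign ℓ (2 * m)) p := by
  obtain ⟨q, hq, hqn⟩ : ∃ q : (cycleBouquet ℓ (2 * m + 1)).Walk (some (i, 0)) (leaf m i),
      q.length + 0 = m ∧ none ∉ q.support :=
    exists_walk_of_le i (a := 0) (b := ⟨m, by omega⟩) (Fin.zero_le _)
  obtain ⟨q', hq', hq'n⟩ : ∃ q' : (cycleBouquet ℓ (2 * m + 1)).Walk (leaf m i')
      (some (i', ⟨2 * m, by omega⟩)), q'.length + m = 2 * m ∧ none ∉ q'.support :=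
    exists_walk_of_le i' (a := ⟨m, by omega⟩) (b := ⟨2 * m, by omega⟩)
      (Fin.mk_le_mk.mpr (by omega))
  have hin : (cycleBouquet ℓ (2 * m + 1)).Adj (some (i, 0)) none :=
    (adj_none_some.mpr (Or.inl rfl)).symm
  have hout : (cycleBouquet ℓ (2 * m + 1)).Adj none (some (i', ⟨2 * m, by omega⟩)) :=
    adj_none_some.mpr (Or.inr rfl)
  have hσin : sign ℓ (2 * m) s(some (i, 0), none) = true := by
    simp [sign]
  have hσout : sign ℓ (2 * m) s(none, some (i', ⟨2 * m, by omega⟩)) = false := by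
    simpa [sign, Fin.ext_iff] using hm
  refine ⟨q.reverse.append (.cons hin (.cons hout q'.reverse)), ?_, ?_⟩
  · simp only [Walk.length_append, Walk.length_reverse, Walk.length_cons]
    omega
  · have hq0 : negCount (sign ℓ (2 * m)) q = 0 :=
      negCount_eq_zero _ fun _ => sign_eq_false_of_mem_edges hqn
    have hq'0 : negCount (sign ℓ (2 * m)) q' = 0 :=
      negCount_eq_zero _ fun _ => sign_eq_false_of_mem_edges hq'n
    simp only [IsNegWalk, negCount_append, negCount_reverse, negCount_cons, hq0, hq'0, hσin, hσout]
    decide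

lemma strongExactDistNeg_adj_leaf (hm : m ≠ 0) {i i' : Fin ℓ} (hii' : i ≠ i') :
    (strongExactDistNeg (cycleBouquet ℓ (2 * m + 1)) (sign ℓ (2 * m)) (2 * m + 2)).Adj
      (leaf m i) (leaf m i') := by
  obtain ⟨p, hlen, hneg⟩ := exists_negWalk_leaf hm i i'
  have hdist : (cycleBouquet ℓ (2 * m + 1)).dist (leaf m i) (leaf m i') = 2 * m + 2 := by
    refine le_antisymm (hlen ▸ SimpleGraph.dist_le p) ?_
    have := p.reachable.sub_le_dist (potential_le_potential_add_one i')
    rw [potential_leaf, potential_leaf, if_neg hii', if_pos rfl] at this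
    omega
  exact (SimpleGraph.fromRel_adj ..).mpr ⟨leaf_injective.ne hii', Or.inl
    ⟨hdist, p, p.isPath_of_length_eq_dist (hlen.trans hdist.symm), hlen, hneg⟩⟩

end cycleBouquet

open cycleBouquet in
theorem exists_outerplanar_strongExactDistNeg_clique
    (k ℓ : ℕ) (hk : 4 ≤ k) (hke : Even k) :
    ∃ (V : Type) (_ : Fintype V) (G : SimpleGraph V) (σ : Sym2 V → Bool),
      IsOuterplanar G ∧
      (∃ t : Finset V, t.card = ℓ ∧ (strongExactDistNeg G σ k).IsClique ↑t) ∧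
      (ℓ : ℕ∞) ≤ (strongExactDistNeg G σ k).chromaticNumber := by
  obtain ⟨m, rfl⟩ : ∃ m, k = 2 * m + 2 := ⟨k / 2 - 1, by obtain ⟨r, hr⟩ := hke; omega⟩
  let t : Finset (Option (Fin ℓ × Fin (2 * m + 1))) := Finset.univ.map ⟨leaf m, leaf_injective⟩
  have hcard : t.card = ℓ := by simp [t]
  have hclique : (strongExactDistNeg (cycleBouquet ℓ (2 * m + 1)) (sign ℓ (2 * m))
      (2 * m + 2)).IsClique (t : Set _) := by
    rw [Finset.coe_map, Finset.coe_univ, Set.image_univ]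
    rintro _ ⟨i, rfl⟩ _ ⟨i', rfl⟩ hne
    exact strongExactDistNeg_adj_leaf (by omega) (ne_of_apply_ne _ hne)
  refine ⟨_, inferInstance, cycleBouquet ℓ (2 * m + 1), sign ℓ (2 * m), isOuterplanar,
    ⟨t, hcard, hclique⟩, ?_⟩
  have := hclique.card_le_chromaticNumber
  rwa [hcard] at this
end

section
/- For every graph G with treewidth at most t and any signature σ, the chromatic number of the strong exact-distance -2 graph of (G,σ) is at most (t+1)·2^t. -/
open SimpleGraph

/-!
Root a tree decomposition of width `t` and order the vertices by the depth of their topmost bags.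
Every vertex strongly 2-reachable from `v` (through a path of length at most 2 whose inner vertex
lies above `v`) then belongs to the topmost bag of `v`, so there are at most `t + 1` of them.
Colour the vertices greedily with `t + 1` colours `c` so that strongly 2-reachable vertices get
different colours: `c` is a proper colouring and no vertex has two smaller neighbours of the same
colour. The latter lets one choose, going up the order, signs `s v j` for the colours `j ≠ c v`
with `s u (c v) xor s v (c u) = σ(uv)` on every edge `uv`. Colour `v` by `c v` together with its
`t` signs: if `x z y` is a negative path with `x` and `y` of the same colour, then
`σ(xz) xor σ(zy) = s x (c z) xor s y (c z) = 0`, a contradiction.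
-/

namespace SimpleGraph

variable {ι : Type*} {T : SimpleGraph ι}

theorem IsAcyclic.eq_bypass [DecidableEq ι] (hT : T.IsAcyclic) {a b : ι} {p : T.Walk a b}
    (hp : p.IsPath) (w : T.Walk a b) : p = w.bypass :=
  congrArg Subtype.val <| (hT.subsingleton_path a b).elim ⟨p, hp⟩ ⟨_, w.bypass_isPath⟩

theorem IsAcyclic.length_eq_dist (hT : T.IsAcyclic) {a b : ι} {p : T.Walk a b}
    (hp : p.IsPath) : p.length = T.dist a b := by
  classical
  obtain ⟨w, hw⟩ := p.reachable.exists_walk_length_eq_dist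
  refine le_antisymm ?_ (dist_le p)
  rw [hT.eq_bypass hp w, ← hw]
  exact w.length_bypass_le_length

theorem exists_walk_support_subset_of_induce_preconnected {S : Set ι}
    (hS : (T.induce S).Preconnected) {a b : ι} (ha : a ∈ S) (hb : b ∈ S) :
    ∃ w : T.Walk a b, ∀ x ∈ w.support, x ∈ S := by
  obtain ⟨w⟩ := hS ⟨a, ha⟩ ⟨b, hb⟩
  refine ⟨w.map (Embedding.induce S).toHom, fun x hx => ?_⟩
  erw [Walk.support_map, List.mem_map] at hx
  obtain ⟨y, -, rfl⟩ := hx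
  exact y.2

theorem IsAcyclic.support_subset_of_induce_preconnected (hT : T.IsAcyclic) {S : Set ι}
    (hS : (T.induce S).Preconnected) {a b : ι} (ha : a ∈ S) (hb : b ∈ S) {p : T.Walk a b}
    (hp : p.IsPath) : ∀ x ∈ p.support, x ∈ S := by
  classical
  obtain ⟨w, hw⟩ := exists_walk_support_subset_of_induce_preconnected hS ha hb
  rw [hT.eq_bypass hp w]
  exact fun x hx => hw x (w.support_bypass_subset_support hx)

theorem IsAcyclic.mem_support_of_forall_dist_le (hT : T.IsAcyclic) {S : Set ι}
    (hS : (T.induce S).Preconnected) {r a : ι} (ha : a ∈ S)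
    (hmin : ∀ i ∈ S, T.dist r a ≤ T.dist r i) {j : ι} (hj : j ∈ S) {q : T.Walk r j}
    (hq : q.IsPath) : a ∈ q.support := by
  classical
  obtain ⟨w, hw⟩ := exists_walk_support_subset_of_induce_preconnected hS ha hj
  suffices key : ∀ {x j : ι} (w : T.Walk x j), (∀ y ∈ w.support, y ∈ S) →
      (∀ p : T.Walk r x, p.IsPath → a ∈ p.support) →
      ∀ q : T.Walk r j, q.IsPath → a ∈ q.support from
    key w hw (fun p _ => p.end_mem_support) q hq
  intro x j w
  induction w with
  | nil => exact fun _ h => h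
  | @cons x x' j hadj w ih =>
    intro hw hx
    refine ih (fun y hy => hw y (List.mem_cons_of_mem _ hy)) fun q hq => ?_
    by_cases hxq : x ∈ q.support
    · exact q.support_takeUntil_subset_support hxq (hx _ (hq.takeUntil hxq))
    have hqx : (q.concat hadj.symm).IsPath := hq.concat hxq hadj.symm
    have hax := hx _ hqx
    rw [Walk.support_concat, List.mem_append, List.mem_singleton] at hax
    refine hax.resolve_right ?_
    rintro rfl
    -- otherwise `x'` would be a point of `S` strictly nearer to `r` than `a`
    have hlen := hT.length_eq_dist hqx
    rw [Walk.length_concat, hT.length_eq_dist hq] at hlen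
    have := hmin x' (hw x' (List.mem_cons_of_mem _ w.start_mem_support))
    omega

theorem IsAcyclic.mem_of_dist_le (hT : T.IsAcyclic) (hTc : T.Connected) {r : ι}
    {S S' : Set ι} (hS : (T.induce S).Preconnected) (hS' : (T.induce S').Preconnected)
    {a a' : ι} (ha : a ∈ S) (hmin : ∀ i ∈ S, T.dist r a ≤ T.dist r i)
    (ha' : a' ∈ S') (hmin' : ∀ i ∈ S', T.dist r a' ≤ T.dist r i)
    {i : ι} (hi : i ∈ S) (hi' : i ∈ S') (hle : T.dist r a ≤ T.dist r a') : a' ∈ S := by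
  classical
  -- `a` and `a'` both lie on the path from `r` to `i`, and `a'` cannot come before `a` on it, so
  -- it lies on the segment from `a` to `i`, which stays inside `S`
  set p := (hTc.preconnected r i).some.bypass
  have hp : p.IsPath := Walk.bypass_isPath _
  have hap := hT.mem_support_of_forall_dist_le hS ha hmin hi hp
  have ha'p := hT.mem_support_of_forall_dist_le hS' ha' hmin' hi' hp
  rw [← p.take_spec hap, Walk.mem_support_append_iff] at ha'p
  rcases ha'p with h | h
  · by_cases hne : a' = a
    · exact hne ▸ ha
    have hlt := Walk.length_takeUntil_lt_length h hne
    rw [hT.length_eq_dist ((hp.takeUntil hap).takeUntil h),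
      hT.length_eq_dist (hp.takeUntil hap)] at hlt
    omega
  · exact hT.support_subset_of_induce_preconnected hS ha hi (hp.dropUntil hap) a' h

end SimpleGraph

theorem exists_linearOrder_monotone {V β : Type*} [LinearOrder β] (f : V → β) :
    ∃ L : LinearOrder V, ∀ ⦃u v⦄, L.le u v → f u ≤ f v := by
  let : LinearOrder V := WellOrderingRel.isWellOrder.linearOrder
  refine ⟨LinearOrder.lift' (fun v => toLex (f v, v)) fun u v h => congrArg Prod.snd h,
    fun u v huv => ?_⟩
  exact (Prod.Lex.le_iff.mp huv).elim le_of_lt fun h => h.1.le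

theorem mem_sReach_two_iff {V : Type} [L : LinearOrder V] {G : SimpleGraph V} {u v : V} :
    u ∈ SReach G L 2 v ↔
      u = v ∨ u < v ∧ (G.Adj u v ∨ ∃ z, v < z ∧ G.Adj u z ∧ G.Adj z v) := by
  constructor
  · rintro ⟨p, hp, hlen, hmin, hlarge⟩
    rcases p with _ | ⟨h₁, _ | ⟨h₂, _ | ⟨h₃, p⟩⟩⟩
    · exact Or.inl rfl
    · simp only [Walk.support_cons, Walk.support_nil, List.mem_cons, List.not_mem_nil,
        or_false, forall_eq_or_imp, le_refl, forall_eq, true_and] at hmin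
      exact Or.inr ⟨lt_of_le_of_ne hmin h₁.ne, Or.inl h₁⟩
    · rename_i z
      simp only [Walk.cons_isPath_iff, Walk.isPath_iff_nil, Walk.nil_nil, Walk.support_nil,
        List.mem_cons, List.not_mem_nil, or_false, true_and, Walk.support_cons, not_or,
        forall_eq_or_imp, Std.le_refl, forall_eq, ne_eq, not_true_eq_false, IsEmpty.forall_iff,
        implies_true, and_true] at hp hmin hlarge
      exact Or.inr ⟨lt_of_le_of_ne hmin.2 hp.2.2,
        Or.inr ⟨z, lt_of_le_of_ne (hlarge h₁.ne') h₂.ne', h₁, h₂⟩⟩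
    · simp at hlen
  · rintro (rfl | ⟨huv, h | ⟨z, hvz, huz, hzv⟩⟩)
    · exact ⟨Walk.nil, by simp, by simp, by simp, by simp⟩
    · exact ⟨Walk.cons h Walk.nil, by simp [h.ne], by simp, by simp [huv.le], by simp⟩
    · refine ⟨Walk.cons huz (Walk.cons hzv Walk.nil), ?_, by simp, ?_, ?_⟩
      · simp [huz.ne, hzv.ne, huv.ne]
      · simp [huv.le, (huv.trans hvz).le]
      · simp [hvz.le]

theorem HasTreewidthLE.exists_linearOrder_sReach_two_ncard_le {V : Type} {G : SimpleGraph V}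
    {t : ℕ} (htw : HasTreewidthLE G t) :
    ∃ L : LinearOrder V, ∀ v, (SReach G L 2 v).ncard ≤ t + 1 := by
  obtain ⟨ι, T, B, hTc, hTa, hcov, hedge, hsub, hcard⟩ := htw
  obtain ⟨r⟩ := hTc.nonempty
  let top : V → ι := fun v => Function.argminOn (T.dist r) {i | v ∈ B i} (hcov v)
  have htop_mem : ∀ v, v ∈ B (top v) := fun v => Function.argminOn_mem _ _ (hcov v)
  have htop_le : ∀ v i, v ∈ B i → T.dist r (top v) ≤ T.dist r i :=
    fun v _ hi => Function.argminOn_le (T.dist r) {i | v ∈ B i} hi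
  have hbag : ∀ u v i, T.dist r (top u) ≤ T.dist r (top v) → u ∈ B i → v ∈ B i →
      u ∈ B (top v) := fun u v _ hle hu hv =>
    hTa.mem_of_dist_le hTc (hsub u).preconnected (hsub v).preconnected (htop_mem u)
      (htop_le u) (htop_mem v) (htop_le v) hu hv hle
  obtain ⟨L, hL⟩ := exists_linearOrder_monotone fun v => T.dist r (top v)
  let := L
  refine ⟨L, fun v => ?_⟩
  have hsReach : SReach G L 2 v ⊆ B (top v) := by
    intro u hu
    rcases mem_sReach_two_iff.mp hu with rfl | ⟨huv, hadj | ⟨z, hvz, huz, hzv⟩⟩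
    · exact htop_mem u
    · obtain ⟨i, hu, hv⟩ := hedge u v hadj
      exact hbag u v i (hL huv.le) hu hv
    · obtain ⟨i, hu, hz⟩ := hedge u z huz
      obtain ⟨j, hz', hv⟩ := hedge z v hzv
      exact hbag u v (top z) (hL huv.le) (hbag u z i (hL (huv.trans hvz).le) hu hz)
        (hbag v z j (hL hvz.le) hv hz')
  calc (SReach G L 2 v).ncard ≤ (B (top v) : Set V).ncard := Set.ncard_le_ncard hsReach
    _ = (B (top v)).card := Set.ncard_coe_finset _
    _ ≤ t + 1 := hcard _

section Ordered

variable {V : Type} [L : LinearOrder V] {G : SimpleGraph V}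

attribute [local instance] WellFoundedLT.toWellFoundedRelation

noncomputable def greedyColoring [WellFoundedLT V] (H : SimpleGraph V) (v : V) : ℕ :=
  sInf {i | ∀ u < v, H.Adj u v → greedyColoring H u ≠ i}
termination_by v

theorem greedyColoring_ne [Finite V] (H : SimpleGraph V) {u v : V} (huv : u < v)
    (h : H.Adj u v) : greedyColoring H u ≠ greedyColoring H v := by
  obtain ⟨i, hi⟩ :=
    (Set.toFinite (greedyColoring H '' {w | w < v ∧ H.Adj w v})).exists_notMem
  have hmem := Nat.sInf_mem (s := {i | ∀ w < v, H.Adj w v → greedyColoring H w ≠ i})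
    ⟨i, fun w hw hadj heq => hi ⟨w, ⟨hw, hadj⟩, heq⟩⟩
  rw [greedyColoring.eq_1 H v]
  exact hmem u huv h

theorem greedyColoring_le [Finite V] (H : SimpleGraph V) {m : ℕ} {v : V}
    (h : {u | u < v ∧ H.Adj u v}.ncard ≤ m) : greedyColoring H v ≤ m := by
  set C := greedyColoring H '' {u | u < v ∧ H.Adj u v}
  obtain ⟨i, hi, hiC⟩ : ∃ i ∈ Set.Iic m, i ∉ C := by
    by_contra! hsub
    have := (Set.ncard_le_ncard hsub (Set.toFinite C)).trans
      ((Set.ncard_image_le (Set.toFinite _)).trans h)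
    simp at this
  rw [greedyColoring.eq_1 H v]
  refine (Nat.sInf_le ?_).trans hi
  exact fun u hu hadj heq => hiC ⟨u, ⟨hu, hadj⟩, heq⟩

theorem colorable_of_ncard_lt_adj_le [Finite V] (H : SimpleGraph V) {m : ℕ}
    (h : ∀ v, {u | u < v ∧ H.Adj u v}.ncard ≤ m) : H.Colorable (m + 1) := by
  refine ⟨Coloring.mk
    (fun v => ⟨greedyColoring H v, Nat.lt_succ_of_le (greedyColoring_le H (h v))⟩)
    fun {u v} huv heq => ?_⟩
  rw [Fin.mk.injEq] at heq
  rcases lt_or_gt_of_ne huv.ne with hlt | hlt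
  · exact greedyColoring_ne H hlt huv heq
  · exact greedyColoring_ne H hlt huv.symm heq.symm

open Classical in
noncomputable def signPotential [WellFoundedLT V] (G : SimpleGraph V) (σ : Sym2 V → Bool)
    {α : Type*} (c : V → α) (v : V) (j : α) : Bool :=
  if h : ∃ u < v, G.Adj u v ∧ c u = j then
    xor (signPotential G σ c h.choose (c v)) (σ s(h.choose, v))
  else false
termination_by v
decreasing_by exact h.choose_spec.1

theorem xor_signPotential_eq [WellFoundedLT V] (σ : Sym2 V → Bool) {α : Type*} {c : V → α}
    (hc : ∀ ⦃u u' v⦄, u < v → u' < v → G.Adj u v → G.Adj u' v → c u = c u' → u = u')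
    {u v : V} (h : G.Adj u v) :
    xor (signPotential G σ c u (c v)) (signPotential G σ c v (c u)) = σ s(u, v) := by
  wlog huv : u < v generalizing u v
  · rw [Bool.xor_comm, Sym2.eq_swap]
    exact this h.symm (lt_of_le_of_ne (not_lt.mp huv) h.ne')
  have hex : ∃ w < v, G.Adj w v ∧ c w = c u := ⟨u, huv, h, rfl⟩
  have hchoose : hex.choose = u :=
    hc hex.choose_spec.1 huv hex.choose_spec.2.1 h hex.choose_spec.2.2
  rw [signPotential.eq_1 G σ c v (c u), dif_pos hex, hchoose]
  exact Bool.bne_self_left _ _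

theorem exists_coloring_of_sReach_two_ncard_le [Finite V] {m : ℕ}
    (h : ∀ v, (SReach G L 2 v).ncard ≤ m + 1) :
    ∃ c : V → Fin (m + 1), (∀ ⦃u v⦄, G.Adj u v → c u ≠ c v) ∧
      ∀ ⦃u u' v⦄, u < v → u' < v → G.Adj u v → G.Adj u' v → c u = c u' → u = u' := by
  let H := fromRel fun u v => u ∈ SReach G L 2 v
  have hlower : ∀ v, {u | u < v ∧ H.Adj u v} ⊆ SReach G L 2 v \ {v} := by
    rintro v u ⟨huv, -, hr | hr⟩
    · exact ⟨hr, huv.ne⟩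
    · rcases mem_sReach_two_iff.mp hr with rfl | ⟨hvu, -⟩
      · exact absurd huv (lt_irrefl _)
      · exact absurd huv hvu.not_gt
  obtain ⟨C⟩ := colorable_of_ncard_lt_adj_le (m := m) H fun v => by
    have := Set.ncard_le_ncard (hlower v)
    rw [Set.ncard_sdiff_singleton_of_mem (mem_sReach_two_iff.mpr (Or.inl rfl))] at this
    have := h v
    omega
  have hC : ∀ ⦃u v⦄, u < v → u ∈ SReach G L 2 v → C u ≠ C v :=
    fun u v huv hr => C.valid ⟨huv.ne, Or.inl hr⟩
  refine ⟨C, fun u v hadj => ?_, fun u u' v hu hu' hadj hadj' hc => ?_⟩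
  · rcases lt_or_gt_of_ne hadj.ne with huv | hvu
    · exact hC huv (mem_sReach_two_iff.mpr (Or.inr ⟨huv, Or.inl hadj⟩))
    · exact (hC hvu (mem_sReach_two_iff.mpr (Or.inr ⟨hvu, Or.inl hadj.symm⟩))).symm
  · -- two smaller neighbours of `v` strongly 2-reach each other through `v`
    by_contra hne
    rcases lt_or_gt_of_ne hne with h | h
    · exact hC h (mem_sReach_two_iff.mpr (Or.inr ⟨h, Or.inr ⟨v, hu', hadj, hadj'.symm⟩⟩))
        hc
    · exact hC h (mem_sReach_two_iff.mpr (Or.inr ⟨h, Or.inr ⟨v, hu, hadj', hadj.symm⟩⟩))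
        hc.symm

end Ordered

theorem exists_adj_adj_of_strongExactDistNeg_two_adj {V : Type} {G : SimpleGraph V}
    {σ : Sym2 V → Bool} {x y : V} (h : (strongExactDistNeg G σ 2).Adj x y) :
    ∃ z, G.Adj x z ∧ G.Adj z y ∧ σ s(x, z) ≠ σ s(z, y) := by
  have key : ∀ {a b : V} (p : G.Walk a b), p.length = 2 → IsNegWalk σ p →
      ∃ z, G.Adj a z ∧ G.Adj z b ∧ σ s(a, z) ≠ σ s(z, b) := by
    intro a b p hlen hneg
    rcases p with _ | ⟨h₁, _ | ⟨h₂, _ | ⟨h₃, p⟩⟩⟩ <;> simp at hlen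
    rename_i z
    refine ⟨z, h₁, h₂, fun heq => ?_⟩
    cases hb : σ s(z, b) <;> simp [IsNegWalk, negCount, heq, hb, Nat.odd_iff] at hneg
  rw [strongExactDistNeg, fromRel_adj] at h
  rcases h.2 with ⟨-, p, -, hlen, hneg⟩ | ⟨-, p, -, hlen, hneg⟩
  · exact key p hlen hneg
  · obtain ⟨z, hyz, hzx, hσ⟩ := key p hlen hneg
    refine ⟨z, hzx.symm, hyz.symm, ?_⟩
    rwa [Sym2.eq_swap (a := x), Sym2.eq_swap (a := z) (b := y), ne_comm]

theorem strongExactDistNeg_two_colorable_of_xor_eq {V : Type} {G : SimpleGraph V}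
    {σ : Sym2 V → Bool} {m : ℕ} (c : V → Fin (m + 1)) (hc : ∀ ⦃u v⦄, G.Adj u v → c u ≠ c v)
    (s : V → Fin (m + 1) → Bool)
    (hs : ∀ ⦃u v⦄, G.Adj u v → xor (s u (c v)) (s v (c u)) = σ s(u, v)) :
    (strongExactDistNeg G σ 2).Colorable ((m + 1) * 2 ^ m) := by
  have hcol : (strongExactDistNeg G σ 2).Colorable
      (Fintype.card (Fin (m + 1) × (Fin m → Bool))) := by
    refine (Coloring.mk (fun v => (c v, fun k => s v ((c v).succAbove k))) ?_).colorable
    intro x y hxy heq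
    obtain ⟨z, hxz, hzy, hσ⟩ := exists_adj_adj_of_strongExactDistNeg_two_adj hxy
    obtain ⟨hcxy, hsxy⟩ := Prod.mk.inj heq
    obtain ⟨k, hk⟩ := Fin.exists_succAbove_eq (hc hxz).symm
    have hsz : s x (c z) = s y (c z) := by
      simpa only [← hcxy, hk] using congrFun hsxy k
    apply hσ
    rw [← hs hxz, ← hs hzy, hsz, hcxy, Bool.xor_comm]
  simpa [Fintype.card_fun] using hcol

theorem strongExactDistNeg_two_colorable_of_sReach_two_ncard_le {V : Type}
    [L : LinearOrder V] [Finite V] {G : SimpleGraph V} (σ : Sym2 V → Bool) {m : ℕ}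
    (h : ∀ v, (SReach G L 2 v).ncard ≤ m + 1) :
    (strongExactDistNeg G σ 2).Colorable ((m + 1) * 2 ^ m) := by
  obtain ⟨c, hc_adj, hc_lower⟩ := exists_coloring_of_sReach_two_ncard_le h
  exact strongExactDistNeg_two_colorable_of_xor_eq c hc_adj (signPotential G σ c)
    fun _ _ => xor_signPotential_eq σ hc_lower

theorem strongExactDistNeg_two_chromatic_le_of_treewidth
    {V : Type} [Fintype V] (G : SimpleGraph V) (σ : Sym2 V → Bool) (t : ℕ)
    (htw : HasTreewidthLE G t) :
    (strongExactDistNeg G σ 2).chromaticNumber ≤ (((t + 1) * 2 ^ t : ℕ) : ℕ∞) := by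
  obtain ⟨L, hL⟩ := htw.exists_linearOrder_sReach_two_ncard_le
  exact (strongExactDistNeg_two_colorable_of_sReach_two_ncard_le σ hL).chromaticNumber_le
end
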